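/- Fix n ∈ ℕ and γ > 0. The range of ν̄(c), as c varies over all vectors in (0,∞)^n with geometric mean γ, is {0} if γ > 1, is {1} if γ = 1, and is exactly the set of odd integers ℓ with 1 ≤ ℓ ≤ ν̄(c*) if γ < 1, where c* = (γ,…,γ). -/

import Mathlib

open Polynomial

noncomputable def Pc {n : ℕ} (c : Fin n → ℝ) : Polynomial ℂ :=
  ∏ k, (X + C (c k : ℂ))

/-- The number of roots of `P(z; c) = 1`, counted with multiplicity, in the
closed right half-plane `{z : 0 ≤ Re z}`. -/
noncomputable def nuBar {n : ℕ} (c : Fin n → ℝ) : ℕ :=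
  Multiset.card ((Pc c - 1).roots.filter (fun z => 0 ≤ z.re))

namespace Stmt3Aux

open Real Finset Filter Topology
open scoped Classical

noncomputable def Af {n : ℕ} (c : Fin n → ℝ) (x y : ℝ) : ℝ :=
  ∑ k, Real.arctan (y / (x + c k))

noncomputable def Rf {n : ℕ} (c : Fin n → ℝ) (x y : ℝ) : ℝ :=
  ∑ k, Real.log ((x + c k) ^ 2 + y ^ 2)

noncomputable def Tset {n : ℕ} (c : Fin n → ℝ) : Finset ℤ :=
  (Finset.Icc 1 (n : ℤ)).filter
    (fun m => ∃ y, 0 < y ∧ Af c 0 y = 2 * π * (m : ℝ) ∧ Rf c 0 y ≤ 0)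

variable {n : ℕ} {c : Fin n → ℝ}

section basic

lemma xck_pos (hc : ∀ k, 0 < c k) {x : ℝ} (hx : 0 ≤ x) (k : Fin n) : 0 < x + c k := by
  have := hc k; linarith

lemma q_pos (hc : ∀ k, 0 < c k) {x : ℝ} (hx : 0 ≤ x) (y : ℝ) (k : Fin n) :
    0 < (x + c k) ^ 2 + y ^ 2 := by
  have := xck_pos hc hx k; positivity

lemma Af_zero (x : ℝ) : Af c x 0 = 0 := by
  simp [Af]

lemma Af_strictMono (hc : ∀ k, 0 < c k) (hn : 1 ≤ n) {x : ℝ} (hx : 0 ≤ x) :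
    StrictMono (Af c x) := by
  intro a b hab
  have hne : (Finset.univ : Finset (Fin n)).Nonempty := by
    simpa [Finset.univ_nonempty_iff, Fin.pos_iff_nonempty.symm] using Nat.lt_of_lt_of_le Nat.zero_lt_one hn
  refine Finset.sum_lt_sum_of_nonempty hne ?_
  intro k _
  exact Real.arctan_strictMono (by
    exact div_lt_div_of_pos_right hab (xck_pos hc hx k))

lemma Af_lt (hc : ∀ k, 0 < c k) (hn : 1 ≤ n) {x : ℝ} (hx : 0 ≤ x) (y : ℝ) :
    Af c x y < n * (π / 2) := by
  have hne : (Finset.univ : Finset (Fin n)).Nonempty := by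
    simpa [Finset.univ_nonempty_iff, Fin.pos_iff_nonempty.symm] using Nat.lt_of_lt_of_le Nat.zero_lt_one hn
  have h : Af c x y < ∑ _k : Fin n, (π / 2) := by
    refine Finset.sum_lt_sum_of_nonempty hne ?_
    intro k _
    exact Real.arctan_lt_pi_div_two _
  simpa [Finset.sum_const, Finset.card_univ, nsmul_eq_mul] using h

lemma Af_pos (hc : ∀ k, 0 < c k) (hn : 1 ≤ n) {x y : ℝ} (hx : 0 ≤ x) (hy : 0 < y) :
    0 < Af c x y := by
  have := Af_strictMono hc hn hx hy
  simpa [Af_zero] using this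

lemma Af_le_anti (hc : ∀ k, 0 < c k) {x₁ x₂ y : ℝ} (hy : 0 ≤ y) (h1 : 0 ≤ x₁)
    (h12 : x₁ ≤ x₂) : Af c x₂ y ≤ Af c x₁ y := by
  refine Finset.sum_le_sum ?_
  intro k _
  refine Real.arctan_strictMono.monotone ?_
  exact div_le_div_of_nonneg_left hy (xck_pos hc h1 k) (by linarith [xck_pos hc h1 k])

lemma Af_anti (hc : ∀ k, 0 < c k) (hn : 1 ≤ n) {x₁ x₂ y : ℝ} (hy : 0 < y) (h1 : 0 ≤ x₁)
    (h12 : x₁ < x₂) : Af c x₂ y < Af c x₁ y := by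
  have hne : (Finset.univ : Finset (Fin n)).Nonempty := by
    simpa [Finset.univ_nonempty_iff, Fin.pos_iff_nonempty.symm] using Nat.lt_of_lt_of_le Nat.zero_lt_one hn
  refine Finset.sum_lt_sum_of_nonempty hne ?_
  intro k _
  refine Real.arctan_strictMono ?_
  have h1k := xck_pos hc h1 k
  exact div_lt_div_of_pos_left hy h1k (by linarith)

lemma Af_contY (hc : ∀ k, 0 < c k) {x : ℝ} (hx : 0 ≤ x) :
    Continuous (Af c x) := by
  refine continuous_finset_sum _ ?_
  intro k _
  exact Real.continuous_arctan.comp (continuous_id.div_const _)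

lemma Af_neg (x y : ℝ) : Af c x (-y) = - Af c x y := by
  simp [Af, neg_div]

lemma Rf_neg (x y : ℝ) : Rf c x (-y) = Rf c x y := by
  simp [Rf]

lemma Rf_le (hc : ∀ k, 0 < c k) {x₁ x₂ y₁ y₂ : ℝ} (hx1 : 0 ≤ x₁) (hx12 : x₁ ≤ x₂)
    (hy1 : 0 ≤ y₁) (hy12 : y₁ ≤ y₂) : Rf c x₁ y₁ ≤ Rf c x₂ y₂ := by
  refine Finset.sum_le_sum ?_
  intro k _
  refine Real.log_le_log (q_pos hc hx1 y₁ k) ?_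
  have h1k := xck_pos hc hx1 k
  have : (x₁ + c k) ^ 2 ≤ (x₂ + c k) ^ 2 := by nlinarith
  nlinarith

lemma Rf_lt (hc : ∀ k, 0 < c k) (hn : 1 ≤ n) {x₁ x₂ y₁ y₂ : ℝ} (hx1 : 0 ≤ x₁)
    (hx12 : x₁ ≤ x₂) (hy1 : 0 ≤ y₁) (hy12 : y₁ ≤ y₂) (hstrict : x₁ < x₂ ∨ y₁ < y₂) :
    Rf c x₁ y₁ < Rf c x₂ y₂ := by
  have hne : (Finset.univ : Finset (Fin n)).Nonempty := by
    simpa [Finset.univ_nonempty_iff, Fin.pos_iff_nonempty.symm] using Nat.lt_of_lt_of_le Nat.zero_lt_one hn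
  refine Finset.sum_lt_sum_of_nonempty hne ?_
  intro k _
  refine Real.log_lt_log (q_pos hc hx1 y₁ k) ?_
  have h1k := xck_pos hc hx1 k
  rcases hstrict with h | h
  · nlinarith
  · nlinarith

lemma Rf_prod (hc : ∀ k, 0 < c k) {x : ℝ} (hx : 0 ≤ x) (y : ℝ) :
    Rf c x y = Real.log (∏ k, ((x + c k) ^ 2 + y ^ 2)) := by
  rw [Real.log_prod (fun k _ => (q_pos hc hx y k).ne')]
  rfl

lemma Rf_eq_zero_iff (hc : ∀ k, 0 < c k) {x : ℝ} (hx : 0 ≤ x) (y : ℝ) :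
    Rf c x y = 0 ↔ (∏ k, ((x + c k) ^ 2 + y ^ 2)) = 1 := by
  have hpos : 0 < ∏ k, ((x + c k) ^ 2 + y ^ 2) :=
    Finset.prod_pos fun k _ => q_pos hc hx y k
  rw [Rf_prod hc hx y]
  constructor
  · intro h
    rcases (Real.log_eq_zero).1 h with h' | h' | h'
    · exact absurd h' hpos.ne'
    · exact h'
    · nlinarith
  · intro h; rw [h, Real.log_one]

lemma exists_y (hc : ∀ k, 0 < c k) {x K : ℝ} (hx : 0 ≤ x) (hK : 0 < K)
    (hK2 : K < n * (π / 2)) : ∃ y, 0 < y ∧ Af c x y = K := by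
  have hlim : Tendsto (fun y => Af c x y) atTop (nhds (∑ _k : Fin n, (π / 2))) := by
    refine tendsto_finset_sum _ ?_
    intro k _
    have h1 : Tendsto (fun y : ℝ => y / (x + c k)) atTop atTop :=
      tendsto_id.atTop_div_const (xck_pos hc hx k)
    exact (Real.tendsto_arctan_atTop.mono_right nhdsWithin_le_nhds).comp h1
  have hsum : (∑ _k : Fin n, (π / 2)) = n * (π / 2) := by
    simp [Finset.sum_const, Finset.card_univ, nsmul_eq_mul]
  have hev : ∀ᶠ y in atTop, K < Af c x y := by
    refine hlim.eventually ?_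
    rw [hsum]
    exact eventually_gt_nhds hK2
  obtain ⟨Y, hY⟩ := (hev.and (eventually_ge_atTop (0:ℝ))).exists
  have hcont : ContinuousOn (Af c x) (Set.Icc 0 Y) := (Af_contY hc hx).continuousOn
  have hKmem : K ∈ Set.Icc (Af c x 0) (Af c x Y) := by
    rw [Af_zero]
    exact ⟨hK.le, hY.1.le⟩
  obtain ⟨y, hy, hy2⟩ := intermediate_value_Icc hY.2 hcont hKmem
  refine ⟨y, ?_, hy2⟩
  rcases lt_or_ge 0 y with h | h
  · exact h
  · exfalso
    have hle : Af c x y ≤ 0 := by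
      refine Finset.sum_nonpos ?_
      intro k _
      have hdiv : y / (x + c k) ≤ 0 := div_nonpos_iff.2 (Or.inr ⟨h, (xck_pos hc hx k).le⟩)
      have := Real.arctan_strictMono.monotone hdiv
      simpa [Real.arctan_zero] using this
    rw [hy2] at hle
    linarith

end basic

section bridge

lemma polar {a : ℝ} (b : ℝ) (ha : 0 < a) :
    (a : ℂ) + (b : ℂ) * Complex.I =
      (Real.sqrt (a ^ 2 + b ^ 2) : ℂ) *
        Complex.exp ((Real.arctan (b / a) : ℂ) * Complex.I) := by
  have hq : 0 < a ^ 2 + b ^ 2 := by positivity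
  have hr : 0 < Real.sqrt (a ^ 2 + b ^ 2) := Real.sqrt_pos.2 hq
  have h1 : Real.sqrt (1 + (b / a) ^ 2) = Real.sqrt (a ^ 2 + b ^ 2) / a := by
    have h2 : 1 + (b / a) ^ 2 = (Real.sqrt (a ^ 2 + b ^ 2) / a) ^ 2 := by
      rw [div_pow, div_pow, Real.sq_sqrt hq.le]
      field_simp
    rw [h2, Real.sqrt_sq (by positivity)]
  have hcos : Real.cos (Real.arctan (b / a)) = a / Real.sqrt (a ^ 2 + b ^ 2) := by
    rw [Real.cos_arctan, h1, one_div_div]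
  have hsin : Real.sin (Real.arctan (b / a)) = b / Real.sqrt (a ^ 2 + b ^ 2) := by
    rw [Real.sin_arctan, h1]
    field_simp
  rw [Complex.exp_mul_I, ← Complex.ofReal_cos, ← Complex.ofReal_sin, hcos, hsin]
  have hrC : (Real.sqrt (a ^ 2 + b ^ 2) : ℂ) ≠ 0 := by
    exact_mod_cast hr.ne'
  push_cast
  field_simp

lemma prod_eq_one_iff (hc : ∀ k, 0 < c k) (hn : 1 ≤ n) {x y : ℝ} (hx : 0 ≤ x) :
    (∏ k, ((x : ℂ) + (y : ℂ) * Complex.I + (c k : ℂ))) = 1 ↔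
      (Rf c x y = 0 ∧ ∃ m : ℤ, Af c x y = 2 * π * m) := by
  set r : ℝ := ∏ k, Real.sqrt ((x + c k) ^ 2 + y ^ 2) with hrdef
  have hrpos : 0 < r := Finset.prod_pos fun k _ => Real.sqrt_pos.2 (q_pos hc hx y k)
  have hr2 : r ^ 2 = ∏ k, ((x + c k) ^ 2 + y ^ 2) := by
    rw [hrdef, ← Finset.prod_pow]
    exact Finset.prod_congr rfl fun k _ => Real.sq_sqrt (q_pos hc hx y k).le
  have hfac : ∀ k : Fin n, (x : ℂ) + (y : ℂ) * Complex.I + (c k : ℂ)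
      = ((Real.sqrt ((x + c k) ^ 2 + y ^ 2) : ℝ) : ℂ) *
          Complex.exp ((Real.arctan (y / (x + c k)) : ℂ) * Complex.I) := by
    intro k
    have h1 : (x : ℂ) + (y : ℂ) * Complex.I + (c k : ℂ)
        = ((x + c k : ℝ) : ℂ) + (y : ℂ) * Complex.I := by push_cast; ring
    rw [h1, polar y (xck_pos hc hx k)]
  have hprod : (∏ k, ((x : ℂ) + (y : ℂ) * Complex.I + (c k : ℂ)))
      = (r : ℂ) * Complex.exp ((Af c x y : ℂ) * Complex.I) := by
    rw [Finset.prod_congr rfl (fun k _ => hfac k), Finset.prod_mul_distrib]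
    congr 1
    · rw [hrdef]; push_cast; rfl
    · rw [← Complex.exp_sum]
      congr 1
      rw [Af]
      push_cast
      rw [Finset.sum_mul]
  rw [hprod]
  constructor
  · intro h
    have habs : r = 1 := by
      have := congrArg norm h
      rw [norm_mul, Complex.norm_exp_ofReal_mul_I, Complex.norm_real, mul_one,
        Real.norm_eq_abs, abs_of_pos hrpos, norm_one] at this
      exact this
    have hRf : Rf c x y = 0 := by
      rw [Rf_eq_zero_iff hc hx y, ← hr2, habs, one_pow]
    refine ⟨hRf, ?_⟩
    have hexp : Complex.exp ((Af c x y : ℂ) * Complex.I) = 1 := by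
      rw [habs] at h
      simpa using h
    obtain ⟨m, hm⟩ := Complex.exp_eq_one_iff.1 hexp
    refine ⟨m, ?_⟩
    have hm' : ((Af c x y : ℝ) : ℂ) = ((2 * π * m : ℝ) : ℂ) := by
      apply mul_right_cancel₀ Complex.I_ne_zero
      rw [hm]; push_cast; ring
    exact_mod_cast hm'
  · rintro ⟨hRf, m, hm⟩
    have hq1 : (∏ k, ((x + c k) ^ 2 + y ^ 2)) = 1 := (Rf_eq_zero_iff hc hx y).1 hRf
    have habs : r = 1 := by
      have : r ^ 2 = 1 := by rw [hr2, hq1]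
      nlinarith
    have hexp : Complex.exp ((Af c x y : ℂ) * Complex.I) = 1 := by
      refine Complex.exp_eq_one_iff.2 ⟨m, ?_⟩
      rw [hm]; push_cast; ring
    rw [habs, hexp]; simp

lemma eval_Pc (z : ℂ) : (Pc c - 1).eval z = (∏ k, (z + (c k : ℂ))) - 1 := by
  simp [Pc, eval_prod]

lemma isRoot_iff (hc : ∀ k, 0 < c k) (hn : 1 ≤ n) {z : ℂ} (hz : 0 ≤ z.re) :
    (Pc c - 1).IsRoot z ↔
      (Rf c z.re z.im = 0 ∧ ∃ m : ℤ, Af c z.re z.im = 2 * π * m) := by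
  rw [IsRoot, eval_Pc, sub_eq_zero, ← prod_eq_one_iff hc hn hz]
  have : ∀ k : Fin n, z + (c k : ℂ) = (z.re : ℂ) + (z.im : ℂ) * Complex.I + (c k : ℂ) := by
    intro k
    rw [Complex.re_add_im]
  rw [Finset.prod_congr rfl fun k _ => this k]

lemma Pc_natDegree : (Pc c).natDegree = n := by
  rw [Pc, natDegree_prod]
  · simp [natDegree_X_add_C]
  · intro k _
    exact X_add_C_ne_zero (c k : ℂ)

lemma Pc_sub_one_ne (hn : 1 ≤ n) : Pc c - 1 ≠ (0 : Polynomial ℂ) := by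
  intro h
  have h1 : Pc c = 1 := by
    have := sub_eq_zero.1 h
    simpa using this
  have := Pc_natDegree (c := c)
  rw [h1, natDegree_one] at this
  omega

lemma zck_ne (hc : ∀ k, 0 < c k) {z : ℂ} (hz : 0 ≤ z.re) (k : Fin n) :
    z + (c k : ℂ) ≠ 0 := by
  intro h0
  have : (z + (c k : ℂ)).re = 0 := by rw [h0]; simp
  simp only [Complex.add_re, Complex.ofReal_re] at this
  have := hc k
  linarith

lemma deriv_eval_ne (hc : ∀ k, 0 < c k) (hn : 1 ≤ n) {z : ℂ} (hz : 0 ≤ z.re)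
    (hprod : (∏ k, (z + (c k : ℂ))) = 1) :
    eval z (derivative (Pc c)) ≠ 0 := by
  classical
  have hd : derivative (Pc c) =
      ∑ k, (∏ j ∈ Finset.univ.erase k, (X + C (c j : ℂ))) := by
    rw [Pc]
    rw [Finset.prod_eq_multiset_prod]
    rw [derivative_prod]
    rw [Finset.sum_eq_multiset_sum]
    congr 1
    refine Multiset.map_congr rfl fun k _ => ?_
    rw [derivative_X_add_C, mul_one]
    rw [← Finset.erase_val, ← Finset.prod_eq_multiset_prod]
  have heval : eval z (derivative (Pc c)) = ∑ k, (z + (c k : ℂ))⁻¹ := by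
    rw [hd, eval_finset_sum]
    refine Finset.sum_congr rfl fun k _ => ?_
    rw [eval_prod]
    simp only [eval_add, eval_X, eval_C]
    have hmul : (∏ j ∈ Finset.univ.erase k, (z + (c j : ℂ))) * (z + (c k : ℂ)) = 1 := by
      rw [Finset.prod_erase_mul _ _ (Finset.mem_univ k)]
      exact hprod
    exact eq_inv_of_mul_eq_one_left hmul
  rw [heval]
  intro hsum
  have hre : (∑ k, (z + (c k : ℂ))⁻¹).re = 0 := by rw [hsum]; simp
  rw [Complex.re_sum] at hre
  have hpos : 0 < ∑ k, ((z + (c k : ℂ))⁻¹).re := by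
    have hne : (Finset.univ : Finset (Fin n)).Nonempty := by
      simpa [Finset.univ_nonempty_iff, Fin.pos_iff_nonempty.symm] using Nat.lt_of_lt_of_le Nat.zero_lt_one hn
    refine Finset.sum_pos ?_ hne
    intro k _
    rw [Complex.inv_re]
    have h1 : 0 < (z + (c k : ℂ)).re := by
      simp only [Complex.add_re, Complex.ofReal_re]
      have := hc k; linarith
    have h2 : 0 < Complex.normSq (z + (c k : ℂ)) :=
      Complex.normSq_pos.2 (zck_ne hc hz k)
    positivity
  linarith

lemma mult_one (hc : ∀ k, 0 < c k) (hn : 1 ≤ n) {z : ℂ} (hz : 0 ≤ z.re)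
    (hr : (Pc c - 1).IsRoot z) : rootMultiplicity z (Pc c - 1) = 1 := by
  have hne := Pc_sub_one_ne (c := c) hn
  have hprod : (∏ k, (z + (c k : ℂ))) = 1 := by
    have := hr
    rw [IsRoot, eval_Pc, sub_eq_zero] at this
    exact this
  have hderiv : eval z (derivative (Pc c - 1)) ≠ 0 := by
    rw [derivative_sub, derivative_one, sub_zero]
    exact deriv_eval_ne hc hn hz hprod
  have h1 : 0 < rootMultiplicity z (Pc c - 1) := (rootMultiplicity_pos hne).2 hr
  have h2 : rootMultiplicity z (Pc c - 1) ≤ 1 := by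
    by_contra hcon
    push_neg at hcon
    have hd := derivative_rootMultiplicity_of_root hr
    have hpos : 0 < rootMultiplicity z (derivative (Pc c - 1)) := by omega
    have hdvd : (X - C z) ∣ derivative (Pc c - 1) := by
      refine dvd_trans ?_ (pow_rootMultiplicity_dvd _ z)
      exact dvd_pow_self _ hpos.ne'
    exact hderiv (dvd_iff_isRoot.1 hdvd)
  omega

lemma nuBar_eq (hc : ∀ k, 0 < c k) (hn : 1 ≤ n) :
    nuBar c = (((Pc c - 1).roots.toFinset).filter (fun z => 0 ≤ z.re)).card := by
  classical
  unfold nuBar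
  set M := (Pc c - 1).roots.filter (fun z => 0 ≤ z.re) with hM
  have h1 : Multiset.card M = ∑ z ∈ M.toFinset, M.count z :=
    (Multiset.toFinset_sum_count_eq M).symm
  have hMt : M.toFinset = ((Pc c - 1).roots.toFinset).filter (fun z => 0 ≤ z.re) := by
    rw [hM, Multiset.toFinset_filter]
  rw [h1, hMt.symm, Finset.card_eq_sum_ones]
  refine Finset.sum_congr rfl fun z hz => ?_
  rw [Multiset.mem_toFinset, hM, Multiset.mem_filter] at hz
  obtain ⟨hzr, hzre⟩ := hz
  calc Multiset.count z M = (Pc c - 1).roots.count z := Multiset.count_filter_of_pos hzre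
    _ = 1 := by
        rw [count_roots]
        exact mult_one hc hn hzre ((mem_roots (Pc_sub_one_ne hn)).1 hzr)

lemma mem_F (hc : ∀ k, 0 < c k) (hn : 1 ≤ n) {z : ℂ} :
    z ∈ ((Pc c - 1).roots.toFinset).filter (fun z => 0 ≤ z.re) ↔
      ((Pc c - 1).IsRoot z ∧ 0 ≤ z.re) := by
  rw [Finset.mem_filter, Multiset.mem_toFinset, mem_roots (Pc_sub_one_ne hn)]

end bridge

section rootstruct

lemma root_unique (hc : ∀ k, 0 < c k) (hn : 1 ≤ n) {x₁ y₁ x₂ y₂ : ℝ}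
    (hx₁ : 0 ≤ x₁) (hy₁ : 0 < y₁) (hx₂ : 0 ≤ x₂) (hy₂ : 0 < y₂)
    (hA : Af c x₁ y₁ = Af c x₂ y₂) (hR : Rf c x₁ y₁ = Rf c x₂ y₂) :
    x₁ = x₂ ∧ y₁ = y₂ := by
  rcases lt_trichotomy x₁ x₂ with h | h | h
  · exfalso
    have h1 : Af c x₂ y₁ < Af c x₁ y₁ := Af_anti hc hn hy₁ hx₁ h
    rw [hA] at h1
    have hy : y₁ < y₂ := (Af_strictMono hc hn hx₂).lt_iff_lt.1 h1
    have := Rf_lt hc hn hx₁ h.le hy₁.le hy.le (Or.inl h)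
    rw [hR] at this
    exact lt_irrefl _ this
  · refine ⟨h, ?_⟩
    subst h
    exact (Af_strictMono hc hn hx₁).injective hA
  · exfalso
    have h1 : Af c x₁ y₂ < Af c x₂ y₂ := Af_anti hc hn hy₂ hx₂ h
    rw [← hA] at h1
    have hy : y₂ < y₁ := (Af_strictMono hc hn hx₁).lt_iff_lt.1 h1
    have := Rf_lt hc hn hx₂ h.le hy₂.le hy.le (Or.inl h)
    rw [hR] at this
    exact lt_irrefl _ this

lemma boundary_of_root (hc : ∀ k, 0 < c k) (hn : 1 ≤ n) {m : ℤ} {x y : ℝ}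
    (hx : 0 ≤ x) (hy : 0 < y) (hA : Af c x y = 2 * π * m) (hR : Rf c x y = 0) :
    ∃ y₀, 0 < y₀ ∧ Af c 0 y₀ = 2 * π * m ∧ Rf c 0 y₀ ≤ 0 := by
  have hApos : 0 < Af c x y := Af_pos hc hn hx hy
  have hKpos : 0 < 2 * π * (m : ℝ) := by rw [← hA]; exact hApos
  have hle : Af c x y ≤ Af c 0 y := Af_le_anti hc hy.le le_rfl hx
  have hcont : ContinuousOn (Af c 0) (Set.Icc 0 y) :=
    (Af_contY hc le_rfl).continuousOn
  have hmem : (2 * π * (m : ℝ)) ∈ Set.Icc (Af c 0 0) (Af c 0 y) := by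
    constructor
    · rw [Af_zero]; exact hKpos.le
    · rw [← hA]; exact hle
  obtain ⟨y₀, hy₀mem, hy₀⟩ := intermediate_value_Icc hy.le hcont hmem
  have hy₀pos : 0 < y₀ := by
    rcases eq_or_lt_of_le hy₀mem.1 with h' | h'
    · exfalso
      rw [← h', Af_zero] at hy₀
      linarith
    · exact h'
  refine ⟨y₀, hy₀pos, hy₀, ?_⟩
  calc Rf c 0 y₀ ≤ Rf c x y := Rf_le hc le_rfl hx hy₀pos.le hy₀mem.2
    _ = 0 := hR

lemma cont_implicit {D : Set ℝ} {V : ℝ → ℝ → ℝ} {Y : ℝ → ℝ} {K : ℝ}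
    (hV : ∀ y, ContinuousOn (fun t => V t y) D)
    (hmono : ∀ t ∈ D, StrictMono (V t))
    (hY : ∀ t ∈ D, V t (Y t) = K) : ContinuousOn Y D := by
  intro t₀ ht₀
  have htd : Filter.Tendsto Y (nhdsWithin t₀ D) (nhds (Y t₀)) := by
    rw [Metric.tendsto_nhds]
    intro ε hε
    have h1 : V t₀ (Y t₀ - ε / 2) < K := by
      rw [← hY t₀ ht₀]
      exact hmono t₀ ht₀ (by linarith)
    have h2 : K < V t₀ (Y t₀ + ε / 2) := by
      rw [← hY t₀ ht₀]
      exact hmono t₀ ht₀ (by linarith)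
    have hc₁ : Filter.Tendsto (fun t => V t (Y t₀ - ε / 2)) (nhdsWithin t₀ D)
        (nhds (V t₀ (Y t₀ - ε / 2))) := hV (Y t₀ - ε / 2) t₀ ht₀
    have hc₂ : Filter.Tendsto (fun t => V t (Y t₀ + ε / 2)) (nhdsWithin t₀ D)
        (nhds (V t₀ (Y t₀ + ε / 2))) := hV (Y t₀ + ε / 2) t₀ ht₀
    have ev₁ := hc₁.eventually_lt_const h1
    have ev₂ := hc₂.eventually_const_lt h2
    filter_upwards [ev₁, ev₂, self_mem_nhdsWithin] with t h₁ h₂ htD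
    have hlt1 : Y t₀ - ε / 2 < Y t := by
      have : V t (Y t₀ - ε / 2) < V t (Y t) := by rw [hY t htD]; exact h₁
      exact (hmono t htD).lt_iff_lt.1 this
    have hlt2 : Y t < Y t₀ + ε / 2 := by
      have : V t (Y t) < V t (Y t₀ + ε / 2) := by rw [hY t htD]; exact h₂
      exact (hmono t htD).lt_iff_lt.1 this
    rw [Real.dist_eq, abs_lt]
    constructor <;> linarith
  exact htd

lemma exists_root_of_boundary (hc : ∀ k, 0 < c k) (hn : 1 ≤ n) {m : ℤ} (hm : 1 ≤ m)
    {y₀ : ℝ} (hy₀ : 0 < y₀) (hA : Af c 0 y₀ = 2 * π * m) (hR : Rf c 0 y₀ ≤ 0) :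
    ∃ x, 0 ≤ x ∧ ∃ y, 0 < y ∧ Af c x y = 2 * π * m ∧ Rf c x y = 0 := by
  have hne : (Finset.univ : Finset (Fin n)).Nonempty := by
    simpa [Finset.univ_nonempty_iff, Fin.pos_iff_nonempty.symm] using Nat.lt_of_lt_of_le Nat.zero_lt_one hn
  have hm' : (1 : ℝ) ≤ (m : ℝ) := by exact_mod_cast hm
  have hK : (0:ℝ) < 2 * π * m := by nlinarith [Real.pi_pos]
  have hKn : 2 * π * (m:ℝ) < n * (π / 2) := by rw [← hA]; exact Af_lt hc hn le_rfl y₀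
  have hex : ∀ x : ℝ, 0 ≤ x → ∃ y, 0 < y ∧ Af c x y = 2 * π * m :=
    fun x hx => exists_y hc hx hK hKn
  choose! Y hYpos hYeq using hex
  have hYcont : ContinuousOn Y (Set.Icc 0 2) := by
    refine cont_implicit (V := fun t y => Af c t y) (K := 2 * π * m) ?_ ?_ ?_
    · intro y
      refine continuousOn_finset_sum _ ?_
      intro k _
      refine Real.continuous_arctan.comp_continuousOn ?_
      refine ContinuousOn.div continuousOn_const
        ((continuous_id.add continuous_const).continuousOn) ?_
      intro t ht
      exact (xck_pos hc ht.1 k).ne'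
    · intro t ht
      exact Af_strictMono hc hn ht.1
    · intro t ht
      exact hYeq t ht.1
  have hφcont : ContinuousOn (fun x => Rf c x (Y x)) (Set.Icc 0 2) := by
    refine continuousOn_finset_sum _ ?_
    intro k _
    refine ContinuousOn.log ?_ ?_
    · exact ((((continuous_id.add continuous_const).continuousOn).pow 2).add
        (hYcont.pow 2))
    · intro t ht
      exact (q_pos hc ht.1 (Y t) k).ne'
  have hY0 : Y 0 = y₀ := by
    refine (Af_strictMono hc hn le_rfl).injective ?_
    rw [hYeq 0 le_rfl, hA]
  have hφ0 : Rf c 0 (Y 0) ≤ 0 := by rw [hY0]; exact hR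
  have hφ2 : 0 < Rf c 2 (Y 2) := by
    have h1 : Rf c 2 0 ≤ Rf c 2 (Y 2) :=
      Rf_le hc (by norm_num) le_rfl le_rfl (hYpos 2 (by norm_num)).le
    have h2 : 0 < Rf c 2 0 := by
      refine Finset.sum_pos ?_ hne
      intro k _
      refine Real.log_pos ?_
      have := hc k
      nlinarith
    linarith
  have hmem : (0:ℝ) ∈ Set.Icc (Rf c 0 (Y 0)) (Rf c 2 (Y 2)) := ⟨hφ0, hφ2.le⟩
  obtain ⟨x, hxmem, hx⟩ := intermediate_value_Icc (by norm_num : (0:ℝ) ≤ 2) hφcont hmem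
  exact ⟨x, hxmem.1, Y x, hYpos x hxmem.1, hYeq x hxmem.1, hx⟩

lemma real_root (hc : ∀ k, 0 < c k) (hn : 1 ≤ n) (h1 : ∏ k, c k < 1) :
    ∃ x, 0 ≤ x ∧ (∏ k, (x + c k)) = 1 := by
  have hne : (Finset.univ : Finset (Fin n)).Nonempty := by
    simpa [Finset.univ_nonempty_iff, Fin.pos_iff_nonempty.symm] using Nat.lt_of_lt_of_le Nat.zero_lt_one hn
  have hcont : ContinuousOn (fun x : ℝ => ∏ k, (x + c k)) (Set.Icc 0 1) :=
    (continuous_finset_prod _ fun k _ => continuous_id.add continuous_const).continuousOn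
  have h0 : (∏ k, ((0:ℝ) + c k)) < 1 := by simpa using h1
  have h1' : 1 < ∏ k, ((1:ℝ) + c k) := by
    have h := Finset.prod_lt_prod_of_nonempty (f := fun _ : Fin n => (1:ℝ))
      (g := fun k : Fin n => (1:ℝ) + c k) (fun k _ => one_pos)
      (fun k _ => by simpa using (hc k)) hne
    simpa using h
  have hmem : (1:ℝ) ∈ Set.Icc (∏ k, ((0:ℝ) + c k)) (∏ k, ((1:ℝ) + c k)) :=
    ⟨h0.le, h1'.le⟩
  obtain ⟨x, hxmem, hx⟩ := intermediate_value_Icc (by norm_num : (0:ℝ) ≤ 1) hcont hmem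
  exact ⟨x, hxmem.1, hx⟩

lemma real_root_unique (hc : ∀ k, 0 < c k) (hn : 1 ≤ n) {x₁ x₂ : ℝ} (h1 : 0 ≤ x₁)
    (h2 : 0 ≤ x₂)
    (e1 : (∏ k, (x₁ + c k)) = 1) (e2 : (∏ k, (x₂ + c k)) = 1) : x₁ = x₂ := by
  have hne : (Finset.univ : Finset (Fin n)).Nonempty := by
    simpa [Finset.univ_nonempty_iff, Fin.pos_iff_nonempty.symm] using Nat.lt_of_lt_of_le Nat.zero_lt_one hn
  rcases lt_trichotomy x₁ x₂ with h | h | h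
  · exfalso
    have : (∏ k, (x₁ + c k)) < ∏ k, (x₂ + c k) := by
      refine Finset.prod_lt_prod_of_nonempty (fun k _ => xck_pos hc h1 k)
        (fun k _ => by linarith) hne
    rw [e1, e2] at this
    exact lt_irrefl _ this
  · exact h
  · exfalso
    have : (∏ k, (x₂ + c k)) < ∏ k, (x₁ + c k) := by
      refine Finset.prod_lt_prod_of_nonempty (fun k _ => xck_pos hc h2 k)
        (fun k _ => by linarith) hne
    rw [e1, e2] at this
    exact lt_irrefl _ this

end rootstruct

section tset

lemma mem_Tset (hc : ∀ k, 0 < c k) (hn : 1 ≤ n) {m : ℤ} :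
    m ∈ Tset c ↔
      (1 ≤ m ∧ ∃ y, 0 < y ∧ Af c 0 y = 2 * π * (m : ℝ) ∧ Rf c 0 y ≤ 0) := by
  unfold Tset
  rw [Finset.mem_filter, Finset.mem_Icc]
  constructor
  · rintro ⟨⟨h1, _⟩, h3⟩
    exact ⟨h1, h3⟩
  · rintro ⟨h1, y, hy, hA, hR⟩
    refine ⟨⟨h1, ?_⟩, ⟨y, hy, hA, hR⟩⟩
    have hlt : 2 * π * (m : ℝ) < n * (π / 2) := by rw [← hA]; exact Af_lt hc hn le_rfl y
    have h1R : (1 : ℝ) ≤ (m : ℝ) := by exact_mod_cast h1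
    have hmn : (m : ℝ) < (n : ℝ) := by nlinarith [Real.pi_pos]
    exact_mod_cast hmn.le

lemma Tset_downward (hc : ∀ k, 0 < c k) (hn : 1 ≤ n) {m m' : ℤ}
    (h : m ∈ Tset c) (h1 : 1 ≤ m') (h2 : m' ≤ m) : m' ∈ Tset c := by
  rw [mem_Tset hc hn] at h ⊢
  obtain ⟨hm1, y, hy, hA, hR⟩ := h
  refine ⟨h1, ?_⟩
  have h1R : (1 : ℝ) ≤ (m' : ℝ) := by exact_mod_cast h1
  have h2R : (m' : ℝ) ≤ (m : ℝ) := by exact_mod_cast h2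
  have hK0 : 0 < 2 * π * (m' : ℝ) := by nlinarith [Real.pi_pos]
  have hKle : 2 * π * (m' : ℝ) ≤ 2 * π * (m : ℝ) := by nlinarith [Real.pi_pos]
  have hcont : ContinuousOn (Af c 0) (Set.Icc 0 y) := (Af_contY hc le_rfl).continuousOn
  have hmem : (2 * π * (m' : ℝ)) ∈ Set.Icc (Af c 0 0) (Af c 0 y) := by
    constructor
    · rw [Af_zero]; exact hK0.le
    · rw [hA]; exact hKle
  obtain ⟨y', hy'mem, hy'⟩ := intermediate_value_Icc hy.le hcont hmem
  have hy'pos : 0 < y' := by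
    rcases eq_or_lt_of_le hy'mem.1 with h' | h'
    · exfalso; rw [← h', Af_zero] at hy'; linarith
    · exact h'
  exact ⟨y', hy'pos, hy', le_trans (Rf_le hc le_rfl le_rfl hy'pos.le hy'mem.2) hR⟩

lemma Tset_initial (hc : ∀ k, 0 < c k) (hn : 1 ≤ n) :
    Tset c = Finset.Icc 1 ((Tset c).card : ℤ) := by
  by_cases hne : (Tset c).Nonempty
  · set M := (Tset c).max' hne with hMdef
    have hM : M ∈ Tset c := Finset.max'_mem _ hne
    have hM1 : 1 ≤ M := ((mem_Tset hc hn).1 hM).1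
    have h1 : Tset c = Finset.Icc 1 M := by
      apply Finset.Subset.antisymm
      · intro m hm
        rw [Finset.mem_Icc]
        exact ⟨((mem_Tset hc hn).1 hm).1, Finset.le_max' _ _ hm⟩
      · intro m hm
        rw [Finset.mem_Icc] at hm
        exact Tset_downward hc hn hM hm.1 hm.2
    have hcard : ((Tset c).card : ℤ) = M := by
      rw [h1, Int.card_Icc]
      have : (M + 1 - 1) = M := by ring
      rw [this, Int.toNat_of_nonneg (by omega)]
    rw [hcard, ← h1]
  · rw [Finset.not_nonempty_iff_eq_empty] at hne
    rw [hne]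
    simp

lemma count_formula (hc : ∀ k, 0 < c k) (hn : 1 ≤ n) (h1 : ∏ k, c k < 1) :
    nuBar c = 1 + 2 * (Tset c).card := by
  classical
  rw [nuBar_eq hc hn]
  set F := ((Pc c - 1).roots.toFinset).filter (fun z => 0 ≤ z.re) with hF
  have e1 : (F.filter (fun z => 0 < z.im)).card
      + (F.filter (fun z => ¬ 0 < z.im)).card = F.card :=
    Finset.card_filter_add_card_filter_not _
  have e2 : ((F.filter (fun z => ¬ 0 < z.im)).filter (fun z => z.im < 0)).card
      + ((F.filter (fun z => ¬ 0 < z.im)).filter (fun z => ¬ z.im < 0)).card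
      = (F.filter (fun z => ¬ 0 < z.im)).card :=
    Finset.card_filter_add_card_filter_not _
  have e3 : (F.filter (fun z => ¬ 0 < z.im)).filter (fun z => z.im < 0)
      = F.filter (fun z => z.im < 0) := by
    rw [Finset.filter_filter]
    apply Finset.filter_congr
    intro z _
    constructor
    · rintro ⟨_, h⟩; exact h
    · intro h; exact ⟨by simp; linarith, h⟩
  have e4 : (F.filter (fun z => ¬ 0 < z.im)).filter (fun z => ¬ z.im < 0)
      = F.filter (fun z => z.im = 0) := by
    rw [Finset.filter_filter]
    apply Finset.filter_congr
    intro z _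
    constructor
    · rintro ⟨h₁, h₂⟩
      simp only [not_lt] at h₁ h₂
      linarith
    · intro h
      constructor <;> simp [h]
  -- the real root
  obtain ⟨x₀, hx₀, hx₀eq⟩ := real_root hc hn h1
  have hcard0 : (F.filter (fun z => z.im = 0)).card = 1 := by
    have hsingle : F.filter (fun z => z.im = 0) = {(x₀ : ℂ)} := by
      apply Finset.eq_singleton_iff_unique_mem.2
      constructor
      · rw [Finset.mem_filter, hF, mem_F hc hn]
        refine ⟨⟨?_, by simp [hx₀]⟩, by simp⟩
        rw [IsRoot, eval_Pc, sub_eq_zero]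
        have hcast : (∏ k, ((x₀ : ℂ) + (c k : ℂ))) = ((∏ k, (x₀ + c k) : ℝ) : ℂ) := by
          push_cast; rfl
        rw [hcast, hx₀eq, Complex.ofReal_one]
      · intro z hz
        rw [Finset.mem_filter, hF, mem_F hc hn] at hz
        obtain ⟨⟨hroot, hre⟩, him⟩ := hz
        have hzeq : z = (z.re : ℂ) := by
          apply Complex.ext <;> simp [him]
        rw [IsRoot, eval_Pc, sub_eq_zero] at hroot
        rw [hzeq] at hroot
        have hcast : (∏ k, ((z.re : ℂ) + (c k : ℂ))) = ((∏ k, (z.re + c k) : ℝ) : ℂ) := by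
          push_cast; rfl
        rw [hcast] at hroot
        have hprod : (∏ k, (z.re + c k)) = 1 := by exact_mod_cast hroot
        have := real_root_unique hc hn hre hx₀ hprod hx₀eq
        rw [hzeq, this]
    rw [hsingle, Finset.card_singleton]
  -- conjugation bijection
  have hconj : ∀ z : ℂ, (Pc c - 1).IsRoot z → (Pc c - 1).IsRoot ((starRingEnd ℂ) z) := by
    intro z hz
    rw [IsRoot, eval_Pc, sub_eq_zero] at hz ⊢
    have hmap : (∏ k, ((starRingEnd ℂ) z + (c k : ℂ)))
        = (starRingEnd ℂ) (∏ k, (z + (c k : ℂ))) := by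
      rw [map_prod]
      exact Finset.prod_congr rfl fun k _ => by rw [map_add, Complex.conj_ofReal]
    rw [hmap, hz, map_one]
  have hcardpm : (F.filter (fun z => z.im < 0)).card
      = (F.filter (fun z => 0 < z.im)).card := by
    refine Finset.card_bij' (fun z _ => (starRingEnd ℂ) z) (fun z _ => (starRingEnd ℂ) z)
      ?_ ?_ ?_ ?_
    · intro z hz
      rw [Finset.mem_filter] at hz
      obtain ⟨hzF, him⟩ := hz
      rw [hF, mem_F hc hn] at hzF
      obtain ⟨hroot, hre⟩ := hzF
      show (starRingEnd ℂ) z ∈ F.filter (fun z => 0 < z.im)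
      rw [Finset.mem_filter]
      constructor
      · rw [hF, mem_F hc hn]
        exact ⟨hconj z hroot, by simpa using hre⟩
      · simp only [Complex.conj_im]
        linarith
    · intro z hz
      rw [Finset.mem_filter] at hz
      obtain ⟨hzF, him⟩ := hz
      rw [hF, mem_F hc hn] at hzF
      obtain ⟨hroot, hre⟩ := hzF
      show (starRingEnd ℂ) z ∈ F.filter (fun z => z.im < 0)
      rw [Finset.mem_filter]
      constructor
      · rw [hF, mem_F hc hn]
        exact ⟨hconj z hroot, by simpa using hre⟩
      · simp only [Complex.conj_im]
        linarith
    · intro z _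
      show (starRingEnd ℂ) ((starRingEnd ℂ) z) = z
      simp
    · intro z _
      show (starRingEnd ℂ) ((starRingEnd ℂ) z) = z
      simp
  -- bijection with Tset
  have hcardp : (F.filter (fun z => 0 < z.im)).card = (Tset c).card := by
    refine Finset.card_bij
      (fun z _ => round (Af c z.re z.im / (2 * π))) ?_ ?_ ?_
    · -- maps into Tset
      intro z hz
      rw [Finset.mem_filter] at hz
      obtain ⟨hzF, him⟩ := hz
      rw [hF, mem_F hc hn] at hzF
      obtain ⟨hroot, hre⟩ := hzF
      show round (Af c z.re z.im / (2 * π)) ∈ Tset c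
      obtain ⟨hRf, m, hAf⟩ := (isRoot_iff hc hn hre).1 hroot
      have hround : round (Af c z.re z.im / (2 * π)) = m := by
        rw [hAf]
        have : 2 * π * (m : ℝ) / (2 * π) = (m : ℝ) := by
          field_simp
        rw [this, round_intCast]
      rw [hround, mem_Tset hc hn]
      have hm1 : 1 ≤ m := by
        have hApos : 0 < Af c z.re z.im := Af_pos hc hn hre him
        rw [hAf] at hApos
        by_contra hcon
        push_neg at hcon
        have : (m : ℝ) ≤ 0 := by exact_mod_cast (by omega : m ≤ 0)
        nlinarith [Real.pi_pos]
      exact ⟨hm1, boundary_of_root hc hn hre him hAf hRf⟩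
    · -- injective
      intro z₁ hz₁ z₂ hz₂ heq
      have heq' : round (Af c z₁.re z₁.im / (2 * π)) = round (Af c z₂.re z₂.im / (2 * π)) := heq
      rw [Finset.mem_filter] at hz₁ hz₂
      obtain ⟨hzF₁, him₁⟩ := hz₁
      obtain ⟨hzF₂, him₂⟩ := hz₂
      rw [hF, mem_F hc hn] at hzF₁ hzF₂
      obtain ⟨hroot₁, hre₁⟩ := hzF₁
      obtain ⟨hroot₂, hre₂⟩ := hzF₂
      obtain ⟨hRf₁, m₁, hAf₁⟩ := (isRoot_iff hc hn hre₁).1 hroot₁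
      obtain ⟨hRf₂, m₂, hAf₂⟩ := (isRoot_iff hc hn hre₂).1 hroot₂
      have hr₁ : round (Af c z₁.re z₁.im / (2 * π)) = m₁ := by
        rw [hAf₁]
        have : 2 * π * (m₁ : ℝ) / (2 * π) = (m₁ : ℝ) := by field_simp
        rw [this, round_intCast]
      have hr₂ : round (Af c z₂.re z₂.im / (2 * π)) = m₂ := by
        rw [hAf₂]
        have : 2 * π * (m₂ : ℝ) / (2 * π) = (m₂ : ℝ) := by field_simp
        rw [this, round_intCast]
      have hm : m₁ = m₂ := by rw [← hr₁, ← hr₂, heq']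
      have hA12 : Af c z₁.re z₁.im = Af c z₂.re z₂.im := by
        rw [hAf₁, hAf₂, hm]
      have hR12 : Rf c z₁.re z₁.im = Rf c z₂.re z₂.im := by rw [hRf₁, hRf₂]
      obtain ⟨hre, him⟩ := root_unique hc hn hre₁ him₁ hre₂ him₂ hA12 hR12
      exact Complex.ext hre him
    · -- surjective
      intro m hm
      obtain ⟨hm1, y₀, hy₀, hA₀, hR₀⟩ := (mem_Tset hc hn).1 hm
      obtain ⟨x, hx, y, hy, hA, hR⟩ := exists_root_of_boundary hc hn hm1 hy₀ hA₀ hR₀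
      set z : ℂ := (x : ℂ) + (y : ℂ) * Complex.I with hzdef
      have hzre : z.re = x := by simp [hzdef]
      have hzim : z.im = y := by simp [hzdef]
      have hzmem : z ∈ F.filter (fun z => 0 < z.im) := by
        rw [Finset.mem_filter, hF, mem_F hc hn, hzre, hzim]
        refine ⟨⟨?_, hx⟩, hy⟩
        rw [isRoot_iff hc hn (by rw [hzre]; exact hx), hzre, hzim]
        exact ⟨hR, m, hA⟩
      refine ⟨z, hzmem, ?_⟩
      show round (Af c z.re z.im / (2 * π)) = m
      rw [hzre, hzim, hA]
      have : 2 * π * (m : ℝ) / (2 * π) = (m : ℝ) := by field_simp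
      rw [this, round_intCast]
  rw [← e1, ← e2, e3, e4, hcard0, hcardpm, hcardp]
  ring

lemma cos_arctan_div {a : ℝ} (b : ℝ) (ha : 0 < a) :
    Real.cos (Real.arctan (b / a)) = a / Real.sqrt (a ^ 2 + b ^ 2) := by
  have hq : 0 < a ^ 2 + b ^ 2 := by positivity
  have h1 : Real.sqrt (1 + (b / a) ^ 2) = Real.sqrt (a ^ 2 + b ^ 2) / a := by
    have h2 : 1 + (b / a) ^ 2 = (Real.sqrt (a ^ 2 + b ^ 2) / a) ^ 2 := by
      rw [div_pow, div_pow, Real.sq_sqrt hq.le]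
      field_simp
    rw [h2, Real.sqrt_sq (by positivity)]
  rw [Real.cos_arctan, h1, one_div_div]

lemma Tset_subset (hc : ∀ k, 0 < c k) (hn : 1 ≤ n) {γ : ℝ} (hγ0 : 0 < γ)
    (hp : ∏ k, c k = γ ^ n) : Tset c ⊆ Tset (fun _ : Fin n => γ) := by
  intro m hm
  have hcγ : ∀ k : Fin n, 0 < (fun _ : Fin n => γ) k := fun _ => hγ0
  have hnR : 0 < (n : ℝ) := by exact_mod_cast hn
  rw [mem_Tset hc hn] at hm
  obtain ⟨hm1, y₀, hy₀, hA₀, hR₀⟩ := hm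
  obtain ⟨x, hx, y, hy, hA, hR⟩ := exists_root_of_boundary hc hn hm1 hy₀ hA₀ hR₀
  have hθpos : ∀ k : Fin n, 0 < Real.arctan (y / (x + c k)) := by
    intro k
    have h := Real.arctan_strictMono
      (show (0:ℝ) < y / (x + c k) from div_pos hy (xck_pos hc hx k))
    simpa [Real.arctan_zero] using h
  have hθlt : ∀ k : Fin n, Real.arctan (y / (x + c k)) < π / 2 :=
    fun k => Real.arctan_lt_pi_div_two _
  have hcospos : ∀ k : Fin n, 0 < Real.cos (Real.arctan (y / (x + c k))) :=
    fun k => Real.cos_pos_of_mem_Ioo ⟨by linarith [hθpos k, Real.pi_pos], hθlt k⟩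
  have hsum : (∑ k, Real.arctan (y / (x + c k))) = 2 * π * (m : ℝ) := hA
  have hAlt : Af c x y < n * (π / 2) := Af_lt hc hn hx y
  rw [hA] at hAlt
  set t : ℝ := 2 * π * (m : ℝ) / n with ht
  have h1R : (1 : ℝ) ≤ (m : ℝ) := by exact_mod_cast hm1
  have hKpos : 0 < 2 * π * (m : ℝ) := by nlinarith [Real.pi_pos]
  have htpos : 0 < t := by rw [ht]; positivity
  have htlt : t < π / 2 := by
    rw [ht, div_lt_iff₀ hnR]
    linarith
  have hq1 : (∏ k, ((x + c k) ^ 2 + y ^ 2)) = 1 := (Rf_eq_zero_iff hc hx y).1 hR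
  have hsqrt1 : (∏ k, Real.sqrt ((x + c k) ^ 2 + y ^ 2)) = 1 := by
    have hpos : 0 < ∏ k, Real.sqrt ((x + c k) ^ 2 + y ^ 2) :=
      Finset.prod_pos fun k _ => Real.sqrt_pos.2 (q_pos hc hx y k)
    have hsq : (∏ k, Real.sqrt ((x + c k) ^ 2 + y ^ 2)) ^ 2 = 1 := by
      rw [← Finset.prod_pow,
        Finset.prod_congr rfl fun k _ => Real.sq_sqrt (q_pos hc hx y k).le]
      exact hq1
    nlinarith
  have hprodcos : (∏ k, Real.cos (Real.arctan (y / (x + c k)))) = ∏ k, (x + c k) := by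
    rw [Finset.prod_congr rfl fun k _ => cos_arctan_div y (xck_pos hc hx k),
      Finset.prod_div_distrib, hsqrt1, div_one]
  have hγn : γ ^ n ≤ ∏ k, Real.cos (Real.arctan (y / (x + c k))) := by
    rw [hprodcos, ← hp]
    exact Finset.prod_le_prod (fun k _ => (hc k).le) (fun k _ => by linarith)
  have hw : (∑ _k : Fin n, (1 / (n:ℝ))) = 1 := by
    rw [Finset.sum_const, Finset.card_univ, Fintype.card_fin, nsmul_eq_mul]
    field_simp
  have hjensen : (∑ k, (1/(n:ℝ)) • Real.cos (Real.arctan (y / (x + c k))))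
      ≤ Real.cos (∑ k, (1/(n:ℝ)) • Real.arctan (y / (x + c k))) := by
    refine (strictConcaveOn_cos_Icc.concaveOn).le_map_sum (fun k _ => by positivity) hw ?_
    intro k _
    exact ⟨by linarith [hθpos k], (hθlt k).le⟩
  have hbar : (∑ k, (1/(n:ℝ)) • Real.arctan (y / (x + c k))) = t := by
    simp only [smul_eq_mul]
    rw [← Finset.mul_sum, hsum, ht]
    ring
  have hAM : (∏ k, Real.cos (Real.arctan (y / (x + c k))) ^ ((1:ℝ)/(n:ℝ)))
      ≤ ∑ k, (1/(n:ℝ)) * Real.cos (Real.arctan (y / (x + c k))) :=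
    Real.geom_mean_le_arith_mean_weighted Finset.univ _ _ (fun k _ => by positivity) hw
      (fun k _ => (hcospos k).le)
  have hLHS : γ ≤ ∏ k, Real.cos (Real.arctan (y / (x + c k))) ^ ((1:ℝ)/(n:ℝ)) := by
    rw [Real.finset_prod_rpow Finset.univ _ (fun k _ => (hcospos k).le) _]
    have hγeq : γ = (γ ^ n) ^ ((1:ℝ)/(n:ℝ)) := by
      rw [← Real.rpow_natCast γ n, ← Real.rpow_mul hγ0.le, mul_one_div,
        div_self hnR.ne', Real.rpow_one]
    rw [hγeq]
    exact Real.rpow_le_rpow (by positivity) hγn (by positivity)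
  have hcosbar : γ ≤ Real.cos t := by
    have h2 := hjensen
    rw [hbar] at h2
    simp only [smul_eq_mul] at h2
    linarith [hLHS, hAM]
  rw [mem_Tset hcγ hn]
  have htan : 0 < Real.tan t := Real.tan_pos_of_pos_of_lt_pi_div_two htpos htlt
  have hcost : 0 < Real.cos t := Real.cos_pos_of_mem_Ioo
    ⟨by linarith [Real.pi_pos], htlt⟩
  refine ⟨hm1, γ * Real.tan t, by positivity, ?_, ?_⟩
  · show (∑ _k : Fin n, Real.arctan (γ * Real.tan t / (0 + γ))) = 2 * π * (m : ℝ)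
    have harg : Real.arctan (γ * Real.tan t / (0 + γ)) = t := by
      rw [zero_add, mul_comm, mul_div_assoc, div_self hγ0.ne', mul_one]
      exact Real.arctan_tan (by linarith) htlt
    rw [Finset.sum_congr rfl fun k _ => harg]
    rw [Finset.sum_const, Finset.card_univ, Fintype.card_fin, nsmul_eq_mul, ht]
    field_simp
  · show (∑ _k : Fin n, Real.log ((0 + γ) ^ 2 + (γ * Real.tan t) ^ 2)) ≤ 0
    refine Finset.sum_nonpos ?_
    intro k _
    refine Real.log_nonpos (by positivity) ?_
    have hid : (0 + γ) ^ 2 + (γ * Real.tan t) ^ 2 = (γ / Real.cos t) ^ 2 := by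
      have hs := Real.sin_sq_add_cos_sq t
      rw [Real.tan_eq_sin_div_cos]
      field_simp
      linear_combination γ ^ 2 * hs
    rw [hid]
    have hdiv : γ / Real.cos t ≤ 1 := by
      rw [div_le_one hcost]
      exact hcosbar
    nlinarith [div_nonneg hγ0.le hcost.le]

end tset

section extreme

lemma Rf_abs (x y : ℝ) : Rf c x |y| = Rf c x y := by
  simp [Rf, sq_abs]

lemma Rf_zero_zero (hc : ∀ k, 0 < c k) :
    Rf c 0 0 = 2 * Real.log (∏ k, c k) := by
  have h1 : Rf c 0 0 = ∑ k, Real.log (c k ^ 2) := by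
    unfold Rf
    refine Finset.sum_congr rfl fun k _ => ?_
    norm_num
  rw [h1]
  have h2 : ∀ k : Fin n, Real.log (c k ^ 2) = 2 * Real.log (c k) := by
    intro k
    rw [Real.log_pow]
    push_cast
    ring
  rw [Finset.sum_congr rfl fun k _ => h2 k, ← Finset.mul_sum,
    ← Real.log_prod (fun k _ => (hc k).ne')]

lemma nuBar_eq_zero (hc : ∀ k, 0 < c k) (hn : 1 ≤ n) (h : 1 < ∏ k, c k) :
    nuBar c = 0 := by
  unfold nuBar
  rw [Multiset.card_eq_zero, Multiset.filter_eq_nil]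
  intro z hz
  intro hre
  have hroot : (Pc c - 1).IsRoot z := ((mem_roots (Pc_sub_one_ne hn)).1 hz)
  obtain ⟨hRf, _⟩ := (isRoot_iff hc hn hre).1 hroot
  have hge : Rf c 0 0 ≤ Rf c z.re |z.im| :=
    Rf_le hc le_rfl hre le_rfl (abs_nonneg _)
  rw [Rf_abs, hRf, Rf_zero_zero hc] at hge
  have := Real.log_pos h
  linarith

lemma nuBar_eq_one (hc : ∀ k, 0 < c k) (hn : 1 ≤ n) (h : ∏ k, c k = 1) :
    nuBar c = 1 := by
  rw [nuBar_eq hc hn]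
  have hsingle : ((Pc c - 1).roots.toFinset).filter (fun z => 0 ≤ z.re) = {(0 : ℂ)} := by
    apply Finset.eq_singleton_iff_unique_mem.2
    constructor
    · rw [mem_F hc hn]
      refine ⟨?_, by simp⟩
      rw [IsRoot, eval_Pc, sub_eq_zero]
      have hcast : (∏ k, ((0 : ℂ) + (c k : ℂ))) = ((∏ k, ((0:ℝ) + c k) : ℝ) : ℂ) := by
        push_cast; rfl
      rw [hcast]
      norm_num [h]
    · intro z hz
      rw [mem_F hc hn] at hz
      obtain ⟨hroot, hre⟩ := hz
      obtain ⟨hRf, _⟩ := (isRoot_iff hc hn hre).1 hroot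
      by_contra hzne
      have hstrict : (0 : ℝ) < z.re ∨ (0 : ℝ) < |z.im| := by
        by_contra hcon
        push_neg at hcon
        obtain ⟨h₁, h₂⟩ := hcon
        apply hzne
        apply Complex.ext
        · simp only [Complex.zero_re]
          linarith
        · simp only [Complex.zero_im]
          have : |z.im| = 0 := le_antisymm h₂ (abs_nonneg _)
          exact abs_eq_zero.1 this
      have hgt : Rf c 0 0 < Rf c z.re |z.im| := by
        rcases hstrict with h' | h'
        · exact Rf_lt hc hn le_rfl hre le_rfl (abs_nonneg _) (Or.inl h')
        · exact Rf_lt hc hn le_rfl hre le_rfl (abs_nonneg _) (Or.inr h')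
      rw [Rf_abs, hRf, Rf_zero_zero hc, h, Real.log_one] at hgt
      linarith
  rw [hsingle, Finset.card_singleton]

end extreme

section achieve

set_option maxHeartbeats 2000000 in
lemma achieve {n : ℕ} (hn : 1 ≤ n) {γ : ℝ} (hγ0 : 0 < γ) (hγ1 : γ < 1) :
    ∀ i : ℕ, i ≤ (Tset (fun _ : Fin n => γ)).card →
      ∃ c : Fin n → ℝ, (∀ k, 0 < c k) ∧ (∏ k, c k) = γ ^ n ∧ (Tset c).card = i := by
  obtain ⟨N, rfl⟩ : ∃ N, n = N + 1 := ⟨n - 1, by omega⟩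
  intro i hi
  set cs : Fin (N + 1) → ℝ := fun _ => γ with hcs
  have hcsp : ∀ k, 0 < cs k := fun _ => hγ0
  have hcsprod : (∏ k, cs k) = γ ^ (N + 1) := by
    simp [hcs, Finset.prod_const]
  rcases eq_or_lt_of_le hi with heq | hlt
  · exact ⟨cs, hcsp, hcsprod, heq.symm⟩
  -- the family
  set d : ℝ → ℝ := fun t => γ ^ (N + 1) / t ^ N with hd
  set ct : ℝ → Fin (N + 1) → ℝ := fun t => Fin.snoc (fun _ => t) (d t) with hct
  have hctpos : ∀ t : ℝ, 0 < t → ∀ k, 0 < ct t k := by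
    intro t ht k
    refine Fin.lastCases ?_ ?_ k
    · simp only [hct, Fin.snoc_last, hd]
      positivity
    · intro j
      simpa only [hct, Fin.snoc_castSucc] using ht
  have hctprod : ∀ t : ℝ, 0 < t → (∏ k, ct t k) = γ ^ (N + 1) := by
    intro t ht
    simp only [hct]
    rw [Fin.prod_snoc]
    rw [Finset.prod_const, Finset.card_univ, Fintype.card_fin, hd]
    field_simp
  have hctγ : ct γ = cs := by
    funext k
    refine Fin.lastCases ?_ ?_ k
    · simp only [hct, Fin.snoc_last, hd, hcs]
      rw [pow_succ]
      field_simp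
    · intro j
      simp only [hct, Fin.snoc_castSucc, hcs]
  -- solution function
  set Y : ℤ → ℝ → ℝ := fun m t =>
    if h : ∃ y, 0 < y ∧ Af (ct t) 0 y = 2 * π * (m : ℝ) then h.choose else 0 with hY
  have hYspec : ∀ m : ℤ, 1 ≤ m → 2 * π * (m : ℝ) < (N + 1 : ℕ) * (π / 2) →
      ∀ t : ℝ, γ ≤ t → 0 < Y m t ∧ Af (ct t) 0 (Y m t) = 2 * π * (m : ℝ) := by
    intro m hm1 hKn t ht
    have ht0 : 0 < t := lt_of_lt_of_le hγ0 ht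
    have h1R : (1 : ℝ) ≤ (m : ℝ) := by exact_mod_cast hm1
    have hKpos : 0 < 2 * π * (m : ℝ) := by nlinarith [Real.pi_pos]
    have hex : ∃ y, 0 < y ∧ Af (ct t) 0 y = 2 * π * (m : ℝ) :=
      exists_y (hctpos t ht0) le_rfl hKpos hKn
    simp only [hY]
    rw [dif_pos hex]
    exact hex.choose_spec
  have hone : (1 : ℕ) ≤ N + 1 := by omega
  -- membership criterion
  have hmemF : ∀ m : ℤ, 1 ≤ m → 2 * π * (m : ℝ) < (N + 1 : ℕ) * (π / 2) →
      ∀ t : ℝ, γ ≤ t → (m ∈ Tset (ct t) ↔ Rf (ct t) 0 (Y m t) ≤ 0) := by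
    intro m hm1 hKn t ht
    have ht0 : 0 < t := lt_of_lt_of_le hγ0 ht
    obtain ⟨hYpos, hYeq⟩ := hYspec m hm1 hKn t ht
    constructor
    · intro hm
      obtain ⟨_, y, hy, hA, hR⟩ := (mem_Tset (hctpos t ht0) hone).1 hm
      have : y = Y m t := by
        refine (Af_strictMono (hctpos t ht0) hone le_rfl).injective ?_
        rw [hA, hYeq]
      rw [← this]
      exact hR
    · intro hF
      exact (mem_Tset (hctpos t ht0) hone).2 ⟨hm1, Y m t, hYpos, hYeq, hF⟩
  -- continuity of coordinates
  have hctcont : ∀ k, ContinuousOn (fun t => ct t k) (Set.Ici γ) := by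
    intro k
    refine Fin.lastCases ?_ ?_ k
    · simp only [hct, Fin.snoc_last, hd]
      refine ContinuousOn.div continuousOn_const (continuousOn_pow N) ?_
      intro t ht
      have : 0 < t := lt_of_lt_of_le hγ0 ht
      positivity
    · intro j
      simp only [hct, Fin.snoc_castSucc]
      exact continuousOn_id
  -- continuity of Y m
  have hYcont : ∀ m : ℤ, 1 ≤ m → 2 * π * (m : ℝ) < (N + 1 : ℕ) * (π / 2) →
      ContinuousOn (Y m) (Set.Ici γ) := by
    intro m hm1 hKn
    refine cont_implicit (V := fun t y => Af (ct t) 0 y) (K := 2 * π * (m : ℝ)) ?_ ?_ ?_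
    · intro y
      refine continuousOn_finset_sum _ ?_
      intro k _
      refine Real.continuous_arctan.comp_continuousOn ?_
      refine ContinuousOn.div continuousOn_const
        (continuousOn_const.add (hctcont k)) ?_
      intro t ht
      have := hctpos t (lt_of_lt_of_le hγ0 ht) k
      intro h0
      rw [zero_add] at h0
      linarith
    · intro t ht
      exact Af_strictMono (hctpos t (lt_of_lt_of_le hγ0 ht)) hone le_rfl
    · intro t ht
      exact (hYspec m hm1 hKn t ht).2
  -- continuity of F m
  have hFcont : ∀ m : ℤ, 1 ≤ m → 2 * π * (m : ℝ) < (N + 1 : ℕ) * (π / 2) →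
      ContinuousOn (fun t => Rf (ct t) 0 (Y m t)) (Set.Ici γ) := by
    intro m hm1 hKn
    refine continuousOn_finset_sum _ ?_
    intro k _
    refine ContinuousOn.log ?_ ?_
    · exact (((continuousOn_const.add (hctcont k)).pow 2).add
        ((hYcont m hm1 hKn).pow 2))
    · intro t ht
      exact (q_pos (hctpos t (lt_of_lt_of_le hγ0 ht)) le_rfl (Y m t) k).ne'
  -- large t estimate
  have hbig : ∀ m : ℤ, 1 ≤ m → ∃ T : ℝ, γ ≤ T ∧ ∀ t, T < t → m ∉ Tset (ct t) := by
    intro m hm1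
    by_cases hN4 : 4 ≤ N
    · have hNR : (0 : ℝ) < (N : ℝ) := by
        have : (0 : ℕ) < N := by omega
        exact_mod_cast this
      set β : ℝ := Real.tan (3 * π / (2 * N)) with hβ
      have harg0 : 0 < 3 * π / (2 * N) := by positivity
      have harglt : 3 * π / (2 * N) < π / 2 := by
        rw [div_lt_div_iff₀ (by positivity) (by norm_num)]
        have h4 : (4 : ℝ) ≤ (N : ℝ) := by exact_mod_cast hN4
        nlinarith [Real.pi_pos]
      have hβpos : 0 < β := Real.tan_pos_of_pos_of_lt_pi_div_two harg0 harglt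
      refine ⟨max γ (max 1 β⁻¹), le_max_left _ _, ?_⟩
      intro t ht hmem
      have ht1 : (1 : ℝ) < t := lt_of_le_of_lt (le_max_left 1 β⁻¹ |>.trans (le_max_right γ _)) ht
      have htβ : β⁻¹ < t := lt_of_le_of_lt ((le_max_right 1 β⁻¹).trans (le_max_right γ _)) ht
      have htγ : γ < t := lt_of_le_of_lt (le_max_left γ _) ht
      have ht0 : 0 < t := by linarith
      obtain ⟨_, y, hy, hA, hR⟩ := (mem_Tset (hctpos t ht0) hone).1 hmem
      -- split Af
      have hsplit : Af (ct t) 0 y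
          = (∑ _j : Fin N, Real.arctan (y / (0 + t))) + Real.arctan (y / (0 + d t)) := by
        unfold Af
        rw [Fin.sum_univ_castSucc]
        congr 1
        · refine Finset.sum_congr rfl fun j _ => ?_
          simp only [hct, Fin.snoc_castSucc]
        · simp only [hct, Fin.snoc_last]
      have hlast_lt : Real.arctan (y / (0 + d t)) < π / 2 := Real.arctan_lt_pi_div_two _
      have hsum_eq : (∑ _j : Fin N, Real.arctan (y / (0 + t)))
          = (N : ℝ) * Real.arctan (y / (0 + t)) := by
        rw [Finset.sum_const, Finset.card_univ, Fintype.card_fin, nsmul_eq_mul]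
      have h1R : (1 : ℝ) ≤ (m : ℝ) := by exact_mod_cast hm1
      have hAv : (N : ℝ) * Real.arctan (y / (0 + t)) > 2 * π * (m : ℝ) - π / 2 := by
        have := hA
        rw [hsplit, hsum_eq] at this
        linarith
      have harctan_ge : 3 * π / (2 * (N : ℝ)) < Real.arctan (y / (0 + t)) := by
        rw [div_lt_iff₀ (by positivity : (0:ℝ) < 2 * (N : ℝ))]
        nlinarith [Real.pi_pos, hAv, h1R]
      have hβlt : β < y / (0 + t) := by
        by_contra hcon
        push_neg at hcon
        have hmon := Real.arctan_strictMono.monotone hcon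
        rw [hβ, Real.arctan_tan (by linarith [Real.pi_pos]) harglt] at hmon
        linarith
      rw [zero_add] at hβlt
      have hβt : β * t < y := (lt_div_iff₀ ht0).1 hβlt
      have hy1 : 1 < y := by
        have h1 : β * β⁻¹ < β * t := by
          exact mul_lt_mul_of_pos_left htβ hβpos
        rw [mul_inv_cancel₀ hβpos.ne'] at h1
        linarith
      have hRbig : 0 < Rf (ct t) 0 y := by
        unfold Rf
        rw [Fin.sum_univ_castSucc]
        have hterm : ∀ j : Fin N,
            (0:ℝ) ≤ Real.log ((0 + ct t (Fin.castSucc j)) ^ 2 + y ^ 2) := by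
          intro j
          refine Real.log_nonneg ?_
          have hcc : ct t (Fin.castSucc j) = t := by simp only [hct, Fin.snoc_castSucc]
          rw [hcc, zero_add]
          nlinarith
        have hlastpos : 0 < Real.log ((0 + ct t (Fin.last N)) ^ 2 + y ^ 2) := by
          refine Real.log_pos ?_
          have hds : ct t (Fin.last N) = d t := by simp only [hct, Fin.snoc_last]
          rw [hds]
          have hd0 : 0 < d t := by rw [hd]; positivity
          nlinarith
        have hs := Finset.sum_nonneg
          (fun j (_ : j ∈ (Finset.univ : Finset (Fin N))) => hterm j)
        linarith
      linarith
    · refine ⟨γ, le_rfl, ?_⟩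
      intro t ht hmem
      have ht0 : 0 < t := lt_of_lt_of_le hγ0 ht.le
      obtain ⟨hm1', y, hy, hA, _⟩ := (mem_Tset (hctpos t ht0) hone).1 hmem
      have hAlt : Af (ct t) 0 y < (N + 1 : ℕ) * (π / 2) := Af_lt (hctpos t ht0) hone le_rfl y
      rw [hA] at hAlt
      have h1R : (1 : ℝ) ≤ (m : ℝ) := by exact_mod_cast hm1
      have hcast : ((N + 1 : ℕ) : ℝ) = (N : ℝ) + 1 := by push_cast; ring
      rw [hcast] at hAlt
      have hNlt : (N : ℝ) ≤ 3 := by exact_mod_cast (by omega : N ≤ 3)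
      have hmge : 2 * π * (1:ℝ) ≤ 2 * π * (m:ℝ) := by nlinarith [Real.pi_pos]
      nlinarith [Real.pi_pos]
  -- threshold
  set m₁ : ℤ := (i : ℤ) + 1 with hm₁def
  have hm₁1 : (1:ℤ) ≤ m₁ := by rw [hm₁def]; omega
  have hm₁le : m₁ ≤ ((Tset cs).card : ℤ) := by
    have h' : i + 1 ≤ (Tset cs).card := hlt
    rw [hm₁def]
    exact_mod_cast h'
  have hm₁mem : m₁ ∈ Tset cs := by
    rw [Tset_initial hcsp hone]
    exact Finset.mem_Icc.2 ⟨hm₁1, hm₁le⟩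
  have hKn₁ : 2 * π * (m₁ : ℝ) < (N + 1 : ℕ) * (π / 2) := by
    obtain ⟨_, y, hy, hA, _⟩ := (mem_Tset hcsp hone).1 hm₁mem
    rw [← hA]
    exact Af_lt hcsp hone le_rfl y
  set S := {t : ℝ | t ∈ Set.Ici γ ∧ Rf (ct t) 0 (Y m₁ t) ≤ 0} with hSdef
  have hγmem : γ ∈ S := by
    refine ⟨Set.mem_Ici.2 le_rfl, ?_⟩
    refine (hmemF m₁ hm₁1 hKn₁ γ le_rfl).1 ?_
    rw [hctγ]
    exact hm₁mem
  have hSclosed : IsClosed S := by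
    have hSeq : S = Set.Ici γ ∩ (fun t => Rf (ct t) 0 (Y m₁ t)) ⁻¹' (Set.Iic 0) := by
      ext t
      simp [hSdef]
    rw [hSeq]
    exact ContinuousOn.preimage_isClosed_of_isClosed (hFcont m₁ hm₁1 hKn₁)
      isClosed_Ici isClosed_Iic
  have hSbdd : BddAbove S := by
    obtain ⟨T, hTγ, hT⟩ := hbig m₁ hm₁1
    refine ⟨T, ?_⟩
    intro t htS
    by_contra hcon
    push_neg at hcon
    exact hT t hcon ((hmemF m₁ hm₁1 hKn₁ t htS.1).2 htS.2)
  set t₀ := sSup S with ht₀def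
  have ht₀S : t₀ ∈ S := hSclosed.csSup_mem ⟨γ, hγmem⟩ hSbdd
  have ht₀γ : γ ≤ t₀ := ht₀S.1
  have ht₀0 : 0 < t₀ := lt_of_lt_of_le hγ0 ht₀γ
  rcases Nat.eq_zero_or_pos i with hi0 | hipos
  · -- i = 0 : take t₀ + 1
    have ht'0 : (0:ℝ) < t₀ + 1 := by linarith
    have hγt' : γ ≤ t₀ + 1 := by linarith
    have hnotmem : m₁ ∉ Tset (ct (t₀ + 1)) := by
      intro hmem
      have hF := (hmemF m₁ hm₁1 hKn₁ _ hγt').1 hmem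
      have hmem' : (t₀ + 1) ∈ S := ⟨hγt', hF⟩
      have := le_csSup hSbdd hmem'
      linarith
    have hempty : Tset (ct (t₀ + 1)) = ∅ := by
      rw [Finset.eq_empty_iff_forall_notMem]
      intro m hm
      have hm1 : 1 ≤ m := ((mem_Tset (hctpos _ ht'0) hone).1 hm).1
      have hm₁m : m₁ ≤ m := by rw [hm₁def, hi0]; omega
      exact hnotmem (Tset_downward (hctpos _ ht'0) hone hm hm₁1 hm₁m)
    refine ⟨ct (t₀ + 1), hctpos _ ht'0, hctprod _ ht'0, ?_⟩
    rw [hempty, hi0]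
    rfl
  · -- i ≥ 1
    set m₀ : ℤ := (i : ℤ) with hm₀def
    have hm₀1 : (1:ℤ) ≤ m₀ := by rw [hm₀def]; exact_mod_cast hipos
    have hKn₀ : 2 * π * (m₀ : ℝ) < (N + 1 : ℕ) * (π / 2) := by
      have hle : (m₀ : ℝ) ≤ (m₁ : ℝ) := by
        have : m₀ ≤ m₁ := by rw [hm₀def, hm₁def]; omega
        exact_mod_cast this
      nlinarith [Real.pi_pos]
    have hYlt : Y m₀ t₀ < Y m₁ t₀ := by
      have h₀ := hYspec m₀ hm₀1 hKn₀ t₀ ht₀γ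
      have h₁ := hYspec m₁ hm₁1 hKn₁ t₀ ht₀γ
      have hAlt : Af (ct t₀) 0 (Y m₀ t₀) < Af (ct t₀) 0 (Y m₁ t₀) := by
        rw [h₀.2, h₁.2]
        have hmlt : (m₀ : ℝ) < (m₁ : ℝ) := by
          have : m₀ < m₁ := by rw [hm₀def, hm₁def]; omega
          exact_mod_cast this
        nlinarith [Real.pi_pos]
      exact (Af_strictMono (hctpos t₀ ht₀0) hone le_rfl).lt_iff_lt.1 hAlt
    have hF₀t₀ : Rf (ct t₀) 0 (Y m₀ t₀) < 0 := by
      have hstrict : Rf (ct t₀) 0 (Y m₀ t₀) < Rf (ct t₀) 0 (Y m₁ t₀) :=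
        Rf_lt (hctpos t₀ ht₀0) hone le_rfl le_rfl
          (hYspec m₀ hm₀1 hKn₀ t₀ ht₀γ).1.le hYlt.le (Or.inr hYlt)
      linarith [ht₀S.2]
    have hcont₀ : Filter.Tendsto (fun t => Rf (ct t) 0 (Y m₀ t))
        (nhdsWithin t₀ (Set.Ici γ)) (nhds (Rf (ct t₀) 0 (Y m₀ t₀))) :=
      (hFcont m₀ hm₀1 hKn₀) t₀ ht₀γ
    have hev : ∀ᶠ t in nhdsWithin t₀ (Set.Ici γ), Rf (ct t) 0 (Y m₀ t) < 0 :=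
      hcont₀.eventually_lt_const hF₀t₀
    have hmonof : nhdsWithin t₀ (Set.Ioi t₀) ≤ nhdsWithin t₀ (Set.Ici γ) :=
      nhdsWithin_mono t₀ (fun t ht => le_trans ht₀γ (le_of_lt ht))
    have hev' : ∀ᶠ t in nhdsWithin t₀ (Set.Ioi t₀),
        Rf (ct t) 0 (Y m₀ t) < 0 ∧ t ∈ Set.Ioi t₀ :=
      (hev.filter_mono hmonof).and self_mem_nhdsWithin
    obtain ⟨t', ht'F, ht'mem⟩ := hev'.exists
    have ht'γ : γ ≤ t' := le_trans ht₀γ (le_of_lt ht'mem)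
    have ht'0 : 0 < t' := lt_of_lt_of_le hγ0 ht'γ
    have hm₀mem : m₀ ∈ Tset (ct t') := (hmemF m₀ hm₀1 hKn₀ t' ht'γ).2 ht'F.le
    have hm₁not : m₁ ∉ Tset (ct t') := by
      intro hmem
      have hF := (hmemF m₁ hm₁1 hKn₁ t' ht'γ).1 hmem
      have hmem' : t' ∈ S := ⟨ht'γ, hF⟩
      have := le_csSup hSbdd hmem'
      rw [Set.mem_Ioi] at ht'mem
      linarith
    have hTeq : Tset (ct t') = Finset.Icc 1 m₀ := by
      apply Finset.Subset.antisymm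
      · intro m hm
        rw [Finset.mem_Icc]
        refine ⟨((mem_Tset (hctpos t' ht'0) hone).1 hm).1, ?_⟩
        by_contra hcon
        push_neg at hcon
        have hm₁m : m₁ ≤ m := by rw [hm₁def]; rw [hm₀def] at hcon; omega
        exact hm₁not (Tset_downward (hctpos t' ht'0) hone hm hm₁1 hm₁m)
      · intro m hm
        rw [Finset.mem_Icc] at hm
        exact Tset_downward (hctpos t' ht'0) hone hm₀mem hm.1 hm.2
    refine ⟨ct t', hctpos t' ht'0, hctprod t' ht'0, ?_⟩
    rw [hTeq, Int.card_Icc, hm₀def]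
    omega

end achieve

end Stmt3Aux

/-- for `n ≥ 1` and `γ > 0`, the range of `ν̄(c)` over all
`c ∈ (0,∞)ⁿ` with geometric mean `γ` is `{0}` if `γ > 1`, `{1}` if `γ = 1`,
and exactly the set of odd `ℓ` with `1 ≤ ℓ ≤ ν̄((γ,…,γ))` if `γ < 1`. -/
theorem stmt3 (n : ℕ) (hn : 1 ≤ n) (γ : ℝ) (hγ : 0 < γ) :
    (1 < γ →
      {m : ℕ | ∃ c : Fin n → ℝ, (∀ k, 0 < c k) ∧ (∏ k, c k) = γ ^ n ∧ nuBar c = m}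
        = {0}) ∧
    (γ = 1 →
      {m : ℕ | ∃ c : Fin n → ℝ, (∀ k, 0 < c k) ∧ (∏ k, c k) = γ ^ n ∧ nuBar c = m}
        = {1}) ∧
    (γ < 1 →
      {m : ℕ | ∃ c : Fin n → ℝ, (∀ k, 0 < c k) ∧ (∏ k, c k) = γ ^ n ∧ nuBar c = m}
        = {m : ℕ | Odd m ∧ 1 ≤ m ∧ m ≤ nuBar (fun _ : Fin n => γ)}) := by
  classical
  have hnne : n ≠ 0 := by omega
  refine ⟨?_, ?_, ?_⟩
  · -- γ > 1
    intro hγ1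
    ext m
    simp only [Set.mem_setOf_eq, Set.mem_singleton_iff]
    constructor
    · rintro ⟨c, hc, hprod, rfl⟩
      refine Stmt3Aux.nuBar_eq_zero hc hn ?_
      rw [hprod]
      exact one_lt_pow₀ hγ1 hnne
    · rintro rfl
      refine ⟨fun _ => γ, fun _ => hγ, by simp [Finset.prod_const], ?_⟩
      refine Stmt3Aux.nuBar_eq_zero (fun _ => hγ) hn ?_
      rw [Finset.prod_const]
      simp only [Finset.card_univ, Fintype.card_fin]
      exact one_lt_pow₀ hγ1 hnne
  · -- γ = 1
    intro hγ1
    subst hγ1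
    ext m
    simp only [Set.mem_setOf_eq, Set.mem_singleton_iff]
    constructor
    · rintro ⟨c, hc, hprod, rfl⟩
      exact Stmt3Aux.nuBar_eq_one hc hn (by rw [hprod]; simp)
    · rintro rfl
      exact ⟨fun _ => 1, fun _ => one_pos, by simp,
        Stmt3Aux.nuBar_eq_one (fun _ => one_pos) hn (by simp)⟩
  · -- γ < 1
    intro hγ1
    have hγc : ∀ k : Fin n, 0 < (fun _ : Fin n => γ) k := fun _ => hγ
    have hprodγ : (∏ _k : Fin n, γ) = γ ^ n := by
      rw [Finset.prod_const]
      simp [Finset.card_univ, Fintype.card_fin]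
    have hγn1 : γ ^ n < 1 := pow_lt_one₀ hγ.le hγ1 hnne
    have hstar : nuBar (fun _ : Fin n => γ)
        = 1 + 2 * (Stmt3Aux.Tset (fun _ : Fin n => γ)).card :=
      Stmt3Aux.count_formula hγc hn (by rw [hprodγ]; exact hγn1)
    ext m
    simp only [Set.mem_setOf_eq]
    constructor
    · rintro ⟨c, hc, hprod, rfl⟩
      have hlt1 : ∏ k, c k < 1 := by rw [hprod]; exact hγn1
      have hform := Stmt3Aux.count_formula hc hn hlt1
      have hsub := Stmt3Aux.Tset_subset hc hn hγ hprod
      have hcardle := Finset.card_le_card hsub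
      refine ⟨⟨(Stmt3Aux.Tset c).card, by rw [hform]; ring⟩, by omega, ?_⟩
      rw [hform, hstar]
      omega
    · rintro ⟨⟨j, hj⟩, h1, hle⟩
      have hjM : j ≤ (Stmt3Aux.Tset (fun _ : Fin n => γ)).card := by
        rw [hstar] at hle
        omega
      obtain ⟨c, hc, hprod, hcard⟩ := Stmt3Aux.achieve hn hγ hγ1 j hjM
      refine ⟨c, hc, hprod, ?_⟩
      rw [Stmt3Aux.count_formula hc hn (by rw [hprod]; exact hγn1), hcard]
      omega
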